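/- Suppose a = 0 and d ≠ 0 and e ≠ 0. If the quadratic form Q = b·z2² + c·z3² + 2d·z1z2 + 2e·z1z3 + 2f·z2z3 factors as Q = L1·L2 for degree-one elements L1, L2 of S, then either 2f = be·d⁻¹ + μ23·cd·e⁻¹ (in which case Q = 2·(z1 + (2d)⁻¹b·z2 + (2e)⁻¹c·z3)·(d·z2 + e·z3)), or 2f = μ12μ23·be·(μ13·d)⁻¹ + μ13·cd·(μ12·e)⁻¹ (in which case Q = 2·(μ21·d·z2 + μ31·e·z3)·(z1 + μ12·b·(2d)⁻¹·z2 + μ13·c·(2e)⁻¹·z3)). -/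

import Mathlib

/-!
When `a = 0` one of the two factors has no `z1`-term. The `z1`-coefficient of the other factor
then links the `z2`- and `z3`-coefficients, which pins down the cross products `p₂q₃` and `p₃q₂`
(hence `f`) in terms of `b, c, d, e`: e.g. if `q₁ = 0`, then
`2e·b = (p₁q₃)(p₂q₂) = (p₁q₂)(p₂q₃) = 2d·p₂q₃`.
-/

/-- `Q = L·L'` in the skew polynomial algebra on three generators (relations
`zj·zi = μij·zi·zj` for `i < j`), expressed via coefficients; here
`L = p.1·z1 + p.2.1·z2 + p.2.2·z3` and `L' = q.1·z1 + q.2.1·z2 + q.2.2·z3`. -/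
def IsFactorization3 {k : Type*} [Field k] (μ12 μ13 μ23 a b c d e f : k)
    (p q : k × k × k) : Prop :=
  p.1 * q.1 = a ∧ p.2.1 * q.2.1 = b ∧ p.2.2 * q.2.2 = c ∧
  p.1 * q.2.1 + μ12 * p.2.1 * q.1 = 2 * d ∧
  p.1 * q.2.2 + μ13 * p.2.2 * q.1 = 2 * e ∧
  p.2.1 * q.2.2 + μ23 * p.2.2 * q.2.1 = 2 * f

section

variable {k : Type*} [Field k] {μ12 μ13 μ23 a b c d e f : k} {p q : k × k × k}

theorem IsFactorization3.two_mul_eq_of_right_fst_eq_zero (h2 : (2 : k) ≠ 0) (hd : d ≠ 0)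
    (he : e ≠ 0) (h : IsFactorization3 μ12 μ13 μ23 a b c d e f p q) (hq : q.1 = 0) :
    2 * f = b * e * d⁻¹ + μ23 * c * d * e⁻¹ := by
  obtain ⟨-, hb, hc, hd', he', hf⟩ := h
  simp only [hq, mul_zero, add_zero] at hd' he'
  have h23 : p.2.1 * q.2.2 * d = b * e := mul_left_cancel₀ h2 <| by
    linear_combination p.1 * q.2.2 * hb + b * he' - p.2.1 * q.2.2 * hd'
  have h32 : p.2.2 * q.2.1 * e = c * d := mul_left_cancel₀ h2 <| by
    linear_combination p.1 * q.2.1 * hc + c * hd' - p.2.2 * q.2.1 * he'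
  rw [← hf]
  field_simp
  linear_combination e * h23 + μ23 * d * h32

theorem IsFactorization3.two_mul_eq_of_left_fst_eq_zero (h2 : (2 : k) ≠ 0)
    (hμ12 : μ12 ≠ 0) (hμ13 : μ13 ≠ 0) (hd : d ≠ 0) (he : e ≠ 0)
    (h : IsFactorization3 μ12 μ13 μ23 a b c d e f p q) (hp : p.1 = 0) :
    2 * f = μ12 * μ23 * b * e * (μ13 * d)⁻¹ + μ13 * c * d * (μ12 * e)⁻¹ := by
  obtain ⟨-, hb, hc, hd', he', hf⟩ := h
  simp only [hp, zero_mul, zero_add] at hd' he'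
  have h23 : μ12 * p.2.1 * q.2.2 * e = μ13 * c * d := mul_left_cancel₀ h2 <| by
    linear_combination μ13 * μ12 * p.2.1 * q.1 * hc + μ13 * c * hd' - μ12 * p.2.1 * q.2.2 * he'
  have h32 : μ13 * p.2.2 * q.2.1 * d = μ12 * b * e := mul_left_cancel₀ h2 <| by
    linear_combination μ12 * μ13 * p.2.2 * q.1 * hb + μ12 * b * he' - μ13 * p.2.2 * q.2.1 * hd'
  rw [← hf]
  field_simp
  linear_combination μ13 * d * h23 + μ23 * μ12 * e * h32

theorem isFactorization3_right_fst_zero_of_two_mul_eq (h2 : (2 : k) ≠ 0) (hd : d ≠ 0)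
    (he : e ≠ 0) (hf : 2 * f = b * e * d⁻¹ + μ23 * c * d * e⁻¹) :
    IsFactorization3 μ12 μ13 μ23 0 b c d e f
      ((2 : k) • ((1 : k), (2 * d)⁻¹ * b, (2 * e)⁻¹ * c)) ((0 : k), d, e) := by
  simp only [IsFactorization3, Prod.smul_mk, smul_eq_mul, hf]
  refine ⟨by ring, ?_, ?_, ?_, ?_, ?_⟩ <;> field_simp <;> ring

theorem isFactorization3_left_fst_zero_of_two_mul_eq (h2 : (2 : k) ≠ 0)
    (hμ12 : μ12 ≠ 0) (hμ13 : μ13 ≠ 0) (hd : d ≠ 0) (he : e ≠ 0)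
    (hf : 2 * f = μ12 * μ23 * b * e * (μ13 * d)⁻¹ + μ13 * c * d * (μ12 * e)⁻¹) :
    IsFactorization3 μ12 μ13 μ23 0 b c d e f
      ((2 : k) • ((0 : k), μ12⁻¹ * d, μ13⁻¹ * e))
      ((1 : k), μ12 * b * (2 * d)⁻¹, μ13 * c * (2 * e)⁻¹) := by
  simp only [IsFactorization3, Prod.smul_mk, smul_eq_mul, hf]
  refine ⟨by ring, ?_, ?_, ?_, ?_, ?_⟩ <;> field_simp <;> ring

end

theorem factorization_dichotomy_a_eq_zero_general {k : Type*} [Field k]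
    (h2 : (2 : k) ≠ 0) (μ12 μ13 μ23 : k)
    (hμ12 : μ12 ≠ 0) (hμ13 : μ13 ≠ 0)
    (b c d e f : k) (hd : d ≠ 0) (he : e ≠ 0)
    (hfact : ∃ p q : k × k × k, IsFactorization3 μ12 μ13 μ23 0 b c d e f p q) :
    (2 * f = b * e * d⁻¹ + μ23 * c * d * e⁻¹ ∧
      IsFactorization3 μ12 μ13 μ23 0 b c d e f
        ((2 : k) • ((1 : k), (2 * d)⁻¹ * b, (2 * e)⁻¹ * c))
        ((0 : k), d, e)) ∨
    (2 * f = μ12 * μ23 * b * e * (μ13 * d)⁻¹ + μ13 * c * d * (μ12 * e)⁻¹ ∧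
      IsFactorization3 μ12 μ13 μ23 0 b c d e f
        ((2 : k) • ((0 : k), μ12⁻¹ * d, μ13⁻¹ * e))
        ((1 : k), μ12 * b * (2 * d)⁻¹, μ13 * c * (2 * e)⁻¹)) := by
  obtain ⟨p, q, h⟩ := hfact
  rcases mul_eq_zero.mp h.1 with hp | hq
  · have hf := h.two_mul_eq_of_left_fst_eq_zero h2 hμ12 hμ13 hd he hp
    exact .inr ⟨hf, isFactorization3_left_fst_zero_of_two_mul_eq h2 hμ12 hμ13 hd he hf⟩
  · have hf := h.two_mul_eq_of_right_fst_eq_zero h2 hd he hq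
    exact .inl ⟨hf, isFactorization3_right_fst_zero_of_two_mul_eq h2 hd he hf⟩

/-- Suppose `a = 0`, `d ≠ 0`, `e ≠ 0`. If
`Q = b·z2² + c·z3² + 2d·z1z2 + 2e·z1z3 + 2f·z2z3` factors as a product of two
degree-one elements, then either `2f = be·d⁻¹ + μ23·cd·e⁻¹` and
`Q = 2·(z1 + (2d)⁻¹b·z2 + (2e)⁻¹c·z3)·(d·z2 + e·z3)`, or
`2f = μ12μ23·be·(μ13·d)⁻¹ + μ13·cd·(μ12·e)⁻¹` and
`Q = 2·(μ21·d·z2 + μ31·e·z3)·(z1 + μ12·b·(2d)⁻¹·z2 + μ13·c·(2e)⁻¹·z3)`. -/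
theorem factorization_dichotomy_a_eq_zero {k : Type*} [Field k] [IsAlgClosed k]
    (h2 : (2 : k) ≠ 0) (μ12 μ13 μ23 : k)
    (hμ12 : μ12 ≠ 0) (hμ13 : μ13 ≠ 0) (hμ23 : μ23 ≠ 0)
    (b c d e f : k) (hd : d ≠ 0) (he : e ≠ 0)
    (hfact : ∃ p q : k × k × k, IsFactorization3 μ12 μ13 μ23 0 b c d e f p q) :
    (2 * f = b * e * d⁻¹ + μ23 * c * d * e⁻¹ ∧
      IsFactorization3 μ12 μ13 μ23 0 b c d e f
        ((2 : k) • ((1 : k), (2 * d)⁻¹ * b, (2 * e)⁻¹ * c))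
        ((0 : k), d, e)) ∨
    (2 * f = μ12 * μ23 * b * e * (μ13 * d)⁻¹ + μ13 * c * d * (μ12 * e)⁻¹ ∧
      IsFactorization3 μ12 μ13 μ23 0 b c d e f
        ((2 : k) • ((0 : k), μ12⁻¹ * d, μ13⁻¹ * e))
        ((1 : k), μ12 * b * (2 * d)⁻¹, μ13 * c * (2 * e)⁻¹)) :=
  factorization_dichotomy_a_eq_zero_general h2 μ12 μ13 μ23 hμ12 hμ13 b c d e f hd he hfact
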